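/- Let c ∈ ℝ³ and c₀ ∈ ℝ with ‖c‖² - c₀² = 1. Then there exist f, b ∈ ℝ³ satisfying: c₀ f + b × c = 0, f · c = 0, f · b = 0, and ‖f‖² - ‖b‖² = 1. -/

import Mathlib

/-!
Take `f ⊥ c` with `‖f‖ = ‖c‖` and `b = (c₀ / ‖c‖²) (f × c)`. Orthogonality gives
`(f × c) × c = -‖c‖² f`, which is the first equation, and `‖f × c‖ = ‖f‖ ‖c‖`, so that
`‖f‖² - ‖b‖² = ‖c‖² - c₀² = 1`.
-/

open Matrix

theorem exists_dotProduct_eq_zero_dotProduct_self_eq {m : Type*} [Fintype m] [Nontrivial m]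
    (c : m → ℝ) : ∃ u : m → ℝ, u ⬝ᵥ c = 0 ∧ u ⬝ᵥ u = c ⬝ᵥ c := by
  obtain ⟨v, hv, hvc⟩ := exists_ne_zero_dotProduct_eq_zero c
  have hvv : v ⬝ᵥ v ≠ 0 := dotProduct_self_eq_zero.not.mpr hv
  have hnonneg (w : m → ℝ) : 0 ≤ w ⬝ᵥ w := Fintype.sum_nonneg fun i => mul_self_nonneg (w i)
  refine ⟨√(c ⬝ᵥ c / v ⬝ᵥ v) • v, by rw [smul_dotProduct, hvc, smul_zero], ?_⟩
  rw [smul_dotProduct, dotProduct_smul, smul_smul, smul_eq_mul,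
    Real.mul_self_sqrt (div_nonneg (hnonneg c) (hnonneg v)),
    div_mul_cancel₀ _ hvv]

theorem cross_cross_self_of_dotProduct_eq_zero {R : Type*} [CommRing R] {u c : Fin 3 → R}
    (h : u ⬝ᵥ c = 0) : u ⨯₃ c ⨯₃ c = -(c ⬝ᵥ c) • u := by
  rw [cross_cross_eq_smul_sub_smul, h, zero_smul, zero_sub, neg_smul]

theorem cross_dot_cross_self_of_dotProduct_eq_zero {R : Type*} [CommRing R] {u c : Fin 3 → R}
    (h : u ⬝ᵥ c = 0) : u ⨯₃ c ⬝ᵥ u ⨯₃ c = u ⬝ᵥ u * c ⬝ᵥ c := by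
  rw [cross_dot_cross, h, zero_mul, sub_zero]

theorem stmt12 (c : Fin 3 → ℝ) (c₀ : ℝ) (h : c ⬝ᵥ c - c₀ ^ 2 = 1) :
    ∃ f b : Fin 3 → ℝ,
      c₀ • f + crossProduct b c = 0 ∧ f ⬝ᵥ c = 0 ∧ f ⬝ᵥ b = 0 ∧
        f ⬝ᵥ f - b ⬝ᵥ b = 1 := by
  obtain ⟨u, huc, huu⟩ := exists_dotProduct_eq_zero_dotProduct_self_eq c
  have hc : c ⬝ᵥ c ≠ 0 := by nlinarith
  refine ⟨u, (c₀ / c ⬝ᵥ c) • u ⨯₃ c, ?_, huc, ?_, ?_⟩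
  · rw [LinearMap.map_smul₂, cross_cross_self_of_dotProduct_eq_zero huc, smul_smul,
      mul_neg, div_mul_cancel₀ _ hc, neg_smul, add_neg_cancel]
  · rw [dotProduct_smul, dot_self_cross, smul_zero]
  · rw [smul_dotProduct, dotProduct_smul, cross_dot_cross_self_of_dotProduct_eq_zero huc, huu,
      smul_eq_mul, smul_eq_mul]
    field_simp
    exact h
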